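/- (Generalised IRL duality: RL∘IRL matches future-state occupancy measures.) In the finite MDP setting with geometric weights η(k) = (1−γ_η)γ_η^k, γ_η ∈ (0,1), let p₀ ∈ PMF S, let π_E be a policy, let Ω̄ : (S → S × A → ℝ) → ℝ be strictly concave, let ψ : (S × A → ℝ) → ℝ be convex, let 𝒟 = { (s₀ ↦ (s,a) ↦ μ_π((s,a)|s₀)) : π a policy }, and define L̄(μ,c) = −Ω̄(μ) − ψ(c) + ∑_{s₀} p₀(s₀) ∑_{(s,a)} c(s,a) · (μ(s₀)(s,a) − μ_{π_E}((s,a)|s₀)). Assume 𝒟 is convex. Suppose c̃ maximizes c ↦ inf_{μ ∈ 𝒟} L̄(μ,c) over all c : S × A → ℝ, μ̃ minimizes μ ↦ L̄(μ,c̃) over 𝒟, and μ̂ minimizes μ ↦ sup_{c} L̄(μ,c) over 𝒟 (the supremum at μ̂ being finite). Then μ̃ = μ̂. -/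

import Mathlib

open scoped BigOperators Classical

/-- `n`-step state–action distribution of the stationary policy `π` started at a state. -/
noncomputable def PstepS {S A : Type*} [Fintype S] [Fintype A]
    (P : S × A → PMF S) (π : S → PMF A) : ℕ → S → S × A → ℝ
  | 0, s₀, x => if x.1 = s₀ then (π x.1 x.2).toReal else 0
  | n + 1, s₀, x => ∑ y : S × A, PstepS P π n s₀ y * (P y x.1).toReal * (π x.1 x.2).toReal

/-- `n`-step state–action distribution of `π` started at a state–action pair. -/
noncomputable def PstepSA {S A : Type*} [Fintype S] [Fintype A]
    (P : S × A → PMF S) (π : S → PMF A) : ℕ → S × A → S × A → ℝ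
  | 0, y, x => if x = y then 1 else 0
  | n + 1, y, x => ∑ z : S × A, PstepSA P π n y z * (P z x.1).toReal * (π x.1 x.2).toReal

/-- η-weighted future state distribution, started at a state. -/
noncomputable def PetaS {S A : Type*} [Fintype S] [Fintype A]
    (P : S × A → PMF S) (π : S → PMF A) (η : ℕ → ℝ) (s₀ : S) (x : S × A) : ℝ :=
  ∑' k, η k * PstepS P π k s₀ x

/-- η-weighted future state distribution, started at a state–action pair. -/
noncomputable def PetaSA {S A : Type*} [Fintype S] [Fintype A]
    (P : S × A → PMF S) (π : S → PMF A) (η : ℕ → ℝ) (y : S × A) (x : S × A) : ℝ :=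
  ∑' k, η k * PstepSA P π k y x

/-- γ-discounted occupancy measure, started at a state. -/
noncomputable def rhoS {S A : Type*} [Fintype S] [Fintype A]
    (P : S × A → PMF S) (π : S → PMF A) (γ : ℝ) (s₀ : S) (x : S × A) : ℝ :=
  ∑' t, γ ^ t * PstepS P π t s₀ x

/-- γ-discounted occupancy measure, started at a state–action pair. -/
noncomputable def rhoSA {S A : Type*} [Fintype S] [Fintype A]
    (P : S × A → PMF S) (π : S → PMF A) (γ : ℝ) (y : S × A) (x : S × A) : ℝ :=
  ∑' t, γ ^ t * PstepSA P π t y x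

/-- η-weighted, γ-discounted future occupancy measure `μ_π`. -/
noncomputable def muS {S A : Type*} [Fintype S] [Fintype A]
    (P : S × A → PMF S) (π : S → PMF A) (γ : ℝ) (η : ℕ → ℝ) (s₀ : S) (x : S × A) : ℝ :=
  ∑' t, ∑' k, γ ^ t * η k * PstepS P π (t + k) s₀ x

/-!
The Lagrangian `L̄(μ, c)` is strictly convex and continuous in `μ` and concave in `c`, and the
closure of `𝒟` is compact because occupancy measures are bounded by `(1 - γ)⁻¹`. A Danskin-type
argument then shows that `(μ̃, c̃)` is a saddle point: moving `c̃` towards any `c`, the minimizers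
of `L̄(·, c̃ + t (c - c̃))` accumulate, as `t → 0`, at the unique minimizer `μ̃` of `L̄(·, c̃)`, and
optimality of `c̃` for the dual function forces `L̄(μ̃, c) ≤ L̄(μ̃, c̃)`. Hence
`sup_c L̄(μ̃, c) = L̄(μ̃, c̃) ≤ L̄(μ̂, c̃) ≤ sup_c L̄(μ̂, c) ≤ sup_c L̄(μ̃, c)`, so `μ̂` also minimizes
the strictly convex `L̄(·, c̃)` over `𝒟`, and `μ̂ = μ̃`.
-/

open Set Filter Topology

lemma PMF.sum_toReal_eq_one {α : Type*} [Fintype α] (p : PMF α) : ∑ a, (p a).toReal = 1 := by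
  rw [← ENNReal.toReal_sum fun a _ => p.apply_ne_top a,
    ← tsum_fintype (L := SummationFilter.unconditional _), p.tsum_coe, ENNReal.toReal_one]

lemma tsum_tsum_le_tsum_mul_tsum {ι κ : Type*} {f : ι → κ → ℝ} {a : ι → ℝ} {b : κ → ℝ}
    (hf : ∀ i j, 0 ≤ f i j) (hfab : ∀ i j, f i j ≤ a i * b j) (ha : Summable a)
    (hb : Summable b) : ∑' i, ∑' j, f i j ≤ (∑' i, a i) * ∑' j, b j := by
  have hinner : ∀ i, ∑' j, f i j ≤ a i * ∑' j, b j := fun i =>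
    ((Summable.of_nonneg_of_le (hf i) (hfab i) (hb.mul_left (a i))).tsum_le_tsum (hfab i)
      (hb.mul_left (a i))).trans_eq tsum_mul_left
  rw [← tsum_mul_right]
  exact (Summable.of_nonneg_of_le (fun i => tsum_nonneg (hf i)) hinner
    (ha.mul_right _)).tsum_le_tsum hinner (ha.mul_right _)

section Occupancy

variable {S A : Type*} [Fintype S] [Fintype A] (P : S × A → PMF S) (π : S → PMF A)

lemma PstepS_nonneg (n : ℕ) (s₀ : S) (x : S × A) : 0 ≤ PstepS P π n s₀ x := by
  induction n generalizing x with
  | zero =>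
    simp only [PstepS]
    split_ifs
    exacts [ENNReal.toReal_nonneg, le_rfl]
  | succ n ih =>
    exact Finset.sum_nonneg fun y _ =>
      mul_nonneg (mul_nonneg (ih y) ENNReal.toReal_nonneg) ENNReal.toReal_nonneg

lemma sum_PstepS (n : ℕ) (s₀ : S) : ∑ x, PstepS P π n s₀ x = 1 := by
  induction n with
  | zero =>
    simp [PstepS, Fintype.sum_prod_type, PMF.sum_toReal_eq_one]
  | succ n ih =>
    have hrow : ∀ y : S × A, ∑ x : S × A, (P y x.1).toReal * (π x.1 x.2).toReal = 1 := fun y => by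
      simp [Fintype.sum_prod_type, ← Finset.mul_sum, PMF.sum_toReal_eq_one]
    simp only [PstepS, mul_assoc]
    rw [Finset.sum_comm]
    simp only [← Finset.mul_sum, hrow, mul_one, ih]

lemma PstepS_le_one (n : ℕ) (s₀ : S) (x : S × A) : PstepS P π n s₀ x ≤ 1 :=
  (Finset.single_le_sum (fun y _ => PstepS_nonneg P π n s₀ y) (Finset.mem_univ x)).trans_eq
    (sum_PstepS P π n s₀)

lemma norm_muS_le {γ : ℝ} {η : ℕ → ℝ} (hγ0 : 0 ≤ γ) (hγ1 : γ < 1) (hη0 : ∀ k, 0 ≤ η k)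
    (hη : Summable η) : ‖muS P π γ η‖ ≤ (1 - γ)⁻¹ * ∑' k, η k := by
  have hterm : ∀ s₀ x t k, 0 ≤ γ ^ t * η k * PstepS P π (t + k) s₀ x := fun s₀ x t k =>
    mul_nonneg (mul_nonneg (pow_nonneg hγ0 t) (hη0 k)) (PstepS_nonneg P π _ s₀ x)
  have hbound : 0 ≤ (1 - γ)⁻¹ * ∑' k, η k :=
    mul_nonneg (inv_nonneg.2 (by linarith)) (tsum_nonneg hη0)
  refine (pi_norm_le_iff_of_nonneg hbound).2 fun s₀ =>
    (pi_norm_le_iff_of_nonneg hbound).2 fun x => ?_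
  rw [muS, Real.norm_of_nonneg (tsum_nonneg fun t => tsum_nonneg (hterm s₀ x t)),
    ← tsum_geometric_of_lt_one hγ0 hγ1]
  exact tsum_tsum_le_tsum_mul_tsum (hterm s₀ x)
    (fun t k => mul_le_of_le_one_right (mul_nonneg (pow_nonneg hγ0 t) (hη0 k))
      (PstepS_le_one P π _ s₀ x))
    (summable_geometric_of_lt_one hγ0 hγ1) hη

end Occupancy

section Saddle

variable {E C : Type*} [AddCommMonoid E] [Module ℝ E]

lemma IsCompact.le_of_forall_exists_convexComb_le {X : Type*} [TopologicalSpace X]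
    [FirstCountableTopology X] {K : Set X} {f g : X → ℝ} {x₀ : X} (hK : IsCompact K)
    (hf : Continuous f) (hg : Continuous g) (hx₀ : IsMinOn f K x₀)
    (huniq : ∀ x ∈ K, IsMinOn f K x → x = x₀)
    (h : ∀ t ∈ Ioo (0 : ℝ) 1, ∃ x ∈ K, (1 - t) * f x + t * g x ≤ f x₀) :
    g x₀ ≤ f x₀ := by
  obtain ⟨t, -, ht, ht0⟩ := exists_seq_strictAnti_tendsto' (zero_lt_one' ℝ)
  choose x hxK hx using fun n => h (t n) (ht n)
  have hgx : ∀ n, g (x n) ≤ f x₀ := fun n => by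
    have hfx := mul_le_mul_of_nonneg_left (hx₀ (hxK n)) (sub_nonneg.2 (ht n).2.le)
    exact le_of_mul_le_mul_left (by linarith [hx n]) (ht n).1
  obtain ⟨x', hx'K, φ, hφ, hxφ⟩ := hK.tendsto_subseq hxK
  have htφ := ht0.comp hφ.tendsto_atTop
  have hmix : Tendsto (fun n => (1 - t (φ n)) * f (x (φ n)) + t (φ n) * g (x (φ n))) atTop
      (𝓝 ((1 - 0) * f x' + 0 * g x')) :=
    ((tendsto_const_nhds.sub htφ).mul ((hf.tendsto x').comp hxφ)).add
      (htφ.mul ((hg.tendsto x').comp hxφ))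
  have hfx' : f x' ≤ f x₀ := by
    simpa using le_of_tendsto hmix (Eventually.of_forall fun n => hx (φ n))
  obtain rfl : x' = x₀ := huniq x' hx'K fun y hy => hfx'.trans (hx₀ hy)
  exact le_of_tendsto ((hg.tendsto x').comp hxφ) (Eventually.of_forall fun n => hgx (φ n))

lemma isMaxOn_of_isMinOn_of_forall_iInf_le_iInf [TopologicalSpace E] [FirstCountableTopology E]
    [AddCommMonoid C] [Module ℝ C]
    {L : E → C → ℝ} {D : Set E} {μ₀ : E} {c₀ : C} (hD : IsCompact (closure D))
    (hcont : ∀ c, Continuous (L · c)) (hconc : ∀ μ, ConcaveOn ℝ univ (L μ))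
    (hstrict : StrictConvexOn ℝ (closure D) (L · c₀)) (hμ₀ : μ₀ ∈ D)
    (hmin : IsMinOn (L · c₀) D μ₀) (hc₀ : ∀ c, ⨅ μ : D, L μ c ≤ ⨅ μ : D, L μ c₀) :
    IsMaxOn (L μ₀) univ c₀ := by
  have : Nonempty D := ⟨⟨μ₀, hμ₀⟩⟩
  have hminK : IsMinOn (L · c₀) (closure D) μ₀ := hmin.closure (hcont c₀).continuousOn
  intro c _
  refine hD.le_of_forall_exists_convexComb_le (hcont c₀) (hcont c) hminK
    (fun μ hμ hμmin => hstrict.eq_of_isMinOn hμmin hminK hμ (subset_closure hμ₀))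
    fun t ht => ?_
  obtain ⟨ν, hνK, hνmin⟩ := hD.exists_isMinOn ⟨μ₀, subset_closure hμ₀⟩
    (hcont ((1 - t) • c₀ + t • c)).continuousOn
  refine ⟨ν, hνK, ?_⟩
  calc (1 - t) * L ν c₀ + t * L ν c
      ≤ L ν ((1 - t) • c₀ + t • c) :=
        (hconc ν).2 trivial trivial (sub_nonneg.2 ht.2.le) ht.1.le (sub_add_cancel 1 t)
    _ ≤ ⨅ μ : D, L μ ((1 - t) • c₀ + t • c) :=
        le_ciInf fun μ => hνmin (subset_closure μ.2)
    _ ≤ ⨅ μ : D, L μ c₀ := hc₀ _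
    _ ≤ L μ₀ c₀ := ciInf_le ⟨L μ₀ c₀, forall_mem_range.2 fun μ : D => hmin μ.2⟩ ⟨μ₀, hμ₀⟩

lemma eq_of_isMinOn_of_forall_iSup_le_iSup {L : E → C → ℝ} {D : Set E} {μ₀ μ₁ : E} {c₀ : C}
    (hstrict : StrictConvexOn ℝ D (L · c₀)) (hμ₀ : μ₀ ∈ D) (hmin : IsMinOn (L · c₀) D μ₀)
    (hmax : IsMaxOn (L μ₀) univ c₀) (hbdd : BddAbove (range (L μ₁))) (hμ₁ : μ₁ ∈ D)
    (hμ₁min : ∀ μ ∈ D, ⨆ c, L μ₁ c ≤ ⨆ c, L μ c) :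
    μ₀ = μ₁ := by
  have : Nonempty C := ⟨c₀⟩
  have hle : L μ₁ c₀ ≤ L μ₀ c₀ :=
    calc L μ₁ c₀ ≤ ⨆ c, L μ₁ c := le_ciSup hbdd c₀
      _ ≤ ⨆ c, L μ₀ c := hμ₁min μ₀ hμ₀
      _ ≤ L μ₀ c₀ := ciSup_le fun c => hmax (mem_univ c)
  exact hstrict.eq_of_isMinOn hmin (fun μ hμ => hle.trans (hmin hμ)) hμ₀ hμ₁

end Saddle

section Lagrangian

variable {S A : Type*} [Fintype S] [Fintype A] {Ω : (S → S × A → ℝ) → ℝ}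
  {ψ : (S × A → ℝ) → ℝ} (p : S → ℝ) (μE : S → S × A → ℝ)

def costGap (μ : S → S × A → ℝ) (c : S × A → ℝ) : ℝ :=
  ∑ s₀, p s₀ * ∑ x, c x * (μ s₀ x - μE s₀ x)

def irlLagrangian (Ω : (S → S × A → ℝ) → ℝ) (ψ : (S × A → ℝ) → ℝ) (μ : S → S × A → ℝ)
    (c : S × A → ℝ) : ℝ :=
  -Ω μ - ψ c + costGap p μE μ c

lemma costGap_smul_add_smul_left {a b : ℝ} (hab : a + b = 1) (μ ν : S → S × A → ℝ)
    (c : S × A → ℝ) :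
    costGap p μE (a • μ + b • ν) c = a * costGap p μE μ c + b * costGap p μE ν c := by
  simp only [costGap, Finset.mul_sum, ← Finset.sum_add_distrib]
  refine Finset.sum_congr rfl fun s₀ _ => Finset.sum_congr rfl fun x _ => ?_
  simp only [Pi.add_apply, Pi.smul_apply, smul_eq_mul]
  linear_combination (p s₀ * c x * μE s₀ x) * hab

lemma costGap_smul_add_smul_right (a b : ℝ) (μ : S → S × A → ℝ) (c c' : S × A → ℝ) :
    costGap p μE μ (a • c + b • c') = a * costGap p μE μ c + b * costGap p μE μ c' := by
  simp only [costGap, Finset.mul_sum, ← Finset.sum_add_distrib]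
  refine Finset.sum_congr rfl fun s₀ _ => Finset.sum_congr rfl fun x _ => ?_
  simp only [Pi.add_apply, Pi.smul_apply, smul_eq_mul]
  ring

lemma continuous_irlLagrangian_left (hΩ : Continuous Ω) (c : S × A → ℝ) :
    Continuous (irlLagrangian p μE Ω ψ · c) := by
  unfold irlLagrangian costGap
  fun_prop

lemma strictConvexOn_irlLagrangian_left (hΩ : StrictConcaveOn ℝ univ Ω) (c : S × A → ℝ) :
    StrictConvexOn ℝ univ (irlLagrangian p μE Ω ψ · c) := by
  refine ⟨convex_univ, fun μ _ ν _ hne a b ha hb hab => ?_⟩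
  have hΩab := hΩ.2 (mem_univ μ) (mem_univ ν) hne ha hb hab
  simp only [irlLagrangian, smul_eq_mul, costGap_smul_add_smul_left p μE hab] at hΩab ⊢
  linear_combination hΩab + ψ c * hab

lemma concaveOn_irlLagrangian_right (hψ : ConvexOn ℝ univ ψ) (μ : S → S × A → ℝ) :
    ConcaveOn ℝ univ (irlLagrangian p μE Ω ψ μ) := by
  refine ⟨convex_univ, fun c _ c' _ a b ha hb hab => ?_⟩
  have hψab := hψ.2 (mem_univ c) (mem_univ c') ha hb hab
  simp only [irlLagrangian, smul_eq_mul, costGap_smul_add_smul_right] at hψab ⊢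
  linear_combination hψab - Ω μ * hab

end Lagrangian

theorem stmt10_general {S A : Type*} [Fintype S] [Fintype A]
    (P : S × A → PMF S) (γ γη : ℝ)
    (hγ : γ ∈ Set.Ioo (0 : ℝ) 1) (hγη : γη ∈ Set.Ioo (0 : ℝ) 1)
    (η : ℕ → ℝ) (hη : ∀ k, η k = (1 - γη) * γη ^ k)
    (p₀ : PMF S) (πE : S → PMF A)
    (Ωb : (S → S × A → ℝ) → ℝ) (hΩ : StrictConcaveOn ℝ Set.univ Ωb)
    (ψ : (S × A → ℝ) → ℝ) (hψ : ConvexOn ℝ Set.univ ψ)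
    -- the set of η-weighted occupancy measures
    (𝒟 : Set (S → S × A → ℝ))
    (h𝒟 : 𝒟 = { μ | ∃ π : S → PMF A, μ = fun s₀ x => muS P π γ η s₀ x })
    (h𝒟conv : Convex ℝ 𝒟)
    -- the IRL Lagrangian
    (Lbar : (S → S × A → ℝ) → (S × A → ℝ) → ℝ)
    (hL : Lbar = fun μ c => -Ωb μ - ψ c +
      ∑ s₀ : S, (p₀ s₀).toReal * ∑ x : S × A, c x * (μ s₀ x - muS P πE γ η s₀ x))
    (ctil : S × A → ℝ) (μtil μhat : S → S × A → ℝ)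
    -- `ctil` maximizes `c ↦ inf_{μ ∈ 𝒟} L̄(μ, c)`
    (hctil : ∀ c : S × A → ℝ, (⨅ μ : 𝒟, Lbar (↑μ) c) ≤ ⨅ μ : 𝒟, Lbar (↑μ) ctil)
    -- `μtil` minimizes `μ ↦ L̄(μ, ctil)` over `𝒟`
    (hμtil : μtil ∈ 𝒟 ∧ ∀ μ ∈ 𝒟, Lbar μtil ctil ≤ Lbar μ ctil)
    -- `μhat` minimizes `μ ↦ sup_c L̄(μ, c)` over `𝒟`, the supremum at `μhat` being finite
    (hbdd : BddAbove (Set.range fun c : S × A → ℝ => Lbar μhat c))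
    (hμhat : μhat ∈ 𝒟 ∧ ∀ μ ∈ 𝒟, (⨆ c : S × A → ℝ, Lbar μhat c) ≤ ⨆ c : S × A → ℝ, Lbar μ c) :
    μtil = μhat := by
  obtain rfl : Lbar = irlLagrangian (fun s₀ => (p₀ s₀).toReal) (muS P πE γ η) Ωb ψ := hL
  have hη0 : ∀ k, 0 ≤ η k := fun k => by
    rw [hη]
    exact mul_nonneg (sub_nonneg.2 hγη.2.le) (pow_nonneg hγη.1.le k)
  have hηsum : Summable η :=
    ((summable_geometric_of_lt_one hγη.1.le hγη.2).mul_left _).congr fun k => (hη k).symm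
  have hcompact : IsCompact (closure 𝒟) := by
    refine (isBounded_iff_forall_norm_le.2 ⟨(1 - γ)⁻¹ * ∑' k, η k, ?_⟩).isCompact_closure
    rw [h𝒟]
    rintro _ ⟨π, rfl⟩
    exact norm_muS_le P π hγ.1.le hγ.2 hη0 hηsum
  have hΩcont : Continuous Ωb :=
    continuousOn_univ.1 (hΩ.concaveOn.continuousOn isOpen_univ)
  have hstrict := strictConvexOn_irlLagrangian_left (fun s₀ => (p₀ s₀).toReal)
    (muS P πE γ η) (ψ := ψ) hΩ ctil
  have hmin : IsMinOn (irlLagrangian _ _ Ωb ψ · ctil) 𝒟 μtil := hμtil.2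
  have hmax := isMaxOn_of_isMinOn_of_forall_iInf_le_iInf hcompact
    (continuous_irlLagrangian_left _ _ hΩcont) (concaveOn_irlLagrangian_right _ _ hψ)
    (hstrict.subset (subset_univ _) h𝒟conv.closure) hμtil.1 hmin hctil
  exact eq_of_isMinOn_of_forall_iSup_le_iSup (hstrict.subset (subset_univ _) h𝒟conv)
    hμtil.1 hmin hmax hbdd hμhat.1 hμhat.2

theorem stmt10 {S A : Type*} [Fintype S] [Fintype A] [Nonempty S] [Nonempty A]
    (P : S × A → PMF S) (γ γη : ℝ)
    (hγ : γ ∈ Set.Ioo (0 : ℝ) 1) (hγη : γη ∈ Set.Ioo (0 : ℝ) 1)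
    (η : ℕ → ℝ) (hη : ∀ k, η k = (1 - γη) * γη ^ k)
    (p₀ : PMF S) (πE : S → PMF A)
    (Ωb : (S → S × A → ℝ) → ℝ) (hΩ : StrictConcaveOn ℝ Set.univ Ωb)
    (ψ : (S × A → ℝ) → ℝ) (hψ : ConvexOn ℝ Set.univ ψ)
    -- the set of η-weighted occupancy measures
    (𝒟 : Set (S → S × A → ℝ))
    (h𝒟 : 𝒟 = { μ | ∃ π : S → PMF A, μ = fun s₀ x => muS P π γ η s₀ x })
    (h𝒟conv : Convex ℝ 𝒟)
    -- the IRL Lagrangian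
    (Lbar : (S → S × A → ℝ) → (S × A → ℝ) → ℝ)
    (hL : Lbar = fun μ c => -Ωb μ - ψ c +
      ∑ s₀ : S, (p₀ s₀).toReal * ∑ x : S × A, c x * (μ s₀ x - muS P πE γ η s₀ x))
    (ctil : S × A → ℝ) (μtil μhat : S → S × A → ℝ)
    -- `ctil` maximizes `c ↦ inf_{μ ∈ 𝒟} L̄(μ, c)`
    (hctil : ∀ c : S × A → ℝ, (⨅ μ : 𝒟, Lbar (↑μ) c) ≤ ⨅ μ : 𝒟, Lbar (↑μ) ctil)
    -- `μtil` minimizes `μ ↦ L̄(μ, ctil)` over `𝒟`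
    (hμtil : μtil ∈ 𝒟 ∧ ∀ μ ∈ 𝒟, Lbar μtil ctil ≤ Lbar μ ctil)
    -- `μhat` minimizes `μ ↦ sup_c L̄(μ, c)` over `𝒟`, the supremum at `μhat` being finite
    (hbdd : BddAbove (Set.range fun c : S × A → ℝ => Lbar μhat c))
    (hμhat : μhat ∈ 𝒟 ∧ ∀ μ ∈ 𝒟, (⨆ c : S × A → ℝ, Lbar μhat c) ≤ ⨆ c : S × A → ℝ, Lbar μ c) :
    μtil = μhat :=
  stmt10_general P γ γη hγ hγη η hη p₀ πE Ωb hΩ ψ hψ 𝒟 h𝒟 h𝒟conv Lbar hL ctil μtil μhat hctil hμtil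
    hbdd hμhat
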